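/- (Approximation guarantee of TRW′) For any distribution ρ on spanning trees of G with κ(G,ρ) = min_e ρ_e > 0 and any non-negative weights and potentials with Φ(θ) > 0, the estimate Φ̂_ρ(θ) = √(L_ρ(θ)·U_ρ(θ)) satisfies max(Φ(θ)/Φ̂_ρ(θ), Φ̂_ρ(θ)/Φ(θ)) ≤ 1/√κ(G,ρ). -/

import Mathlib

/-!
The log-partition function `Φ` is convex, monotone in `θ` (the potentials are nonnegative) and
satisfies `Φ (c • θ) ≤ c * Φ θ` for `c ≥ 1`. Restricting `θ` to a tree only lowers it, so
`L ≤ Φ θ`. On every edge of `G`, `θ` is the `ρ`-average of the rescaled tree weights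
`Π^T_ρ θ`, so convexity gives `Φ θ ≤ U`. Finally `Π^T_ρ θ ≤ κ⁻¹ • Π^T θ` gives `U ≤ L / κ`, and
the sandwich `L ≤ Φ θ ≤ U ≤ L / κ` bounds both ratios of `Φ θ` and `√(L U)` by `1 / √κ`.
-/

open scoped Classical

noncomputable def logPartitionFn {V X : Type*} [Fintype V] [DecidableEq V] [Fintype X]
    (G : SimpleGraph V) [DecidableRel G.Adj]
    (ψ : Sym2 V → (V → X) → ℝ) (θ : Sym2 V → ℝ) : ℝ :=
  Real.log (∑ x : V → X, Real.exp (∑ e ∈ G.edgeFinset, θ e * ψ e x))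

open Finset Real

section LogSumExp

variable {α : Type*} [Fintype α]

theorem log_sum_exp_le_log_sum_exp {S T : α → ℝ} (h : ∀ x, S x ≤ T x) :
    log (∑ x, exp (S x)) ≤ log (∑ x, exp (T x)) := by
  rcases isEmpty_or_nonempty α with hα | hα
  · simp
  exact log_le_log (by positivity) (sum_le_sum fun x _ => exp_le_exp.2 (h x))

theorem log_sum_exp_mul_le {t : ℝ} (ht : 1 ≤ t) (S : α → ℝ) :
    log (∑ x, exp (t * S x)) ≤ t * log (∑ x, exp (S x)) := by
  rcases isEmpty_or_nonempty α with hα | hα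
  · simp
  set A := ∑ x, exp (S x)
  have hA : 0 < A := by positivity
  have hterm : ∀ x, exp (t * S x) ≤ exp ((t - 1) * log A) * exp (S x) := fun x => by
    have hSA : S x ≤ log A :=
      (le_log_iff_exp_le hA).2 (single_le_sum (fun y _ => (exp_pos (S y)).le) (mem_univ x))
    rw [← exp_add, exp_le_exp]
    nlinarith
  calc log (∑ x, exp (t * S x)) ≤ log (exp ((t - 1) * log A) * A) := by
        rw [mul_sum]; exact log_le_log (by positivity) (sum_le_sum fun x _ => hterm x)
    _ = t * log A := by rw [log_mul (exp_pos _).ne' hA.ne', log_exp]; ring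

theorem log_sum_exp_sum_le {ι : Type*} [Fintype ι] {w : ι → ℝ} (hw : ∀ i, 0 ≤ w i)
    (hw1 : ∑ i, w i = 1) (S : ι → α → ℝ) :
    log (∑ x, exp (∑ i, w i * S i x)) ≤ ∑ i, w i * log (∑ x, exp (S i x)) := by
  rcases isEmpty_or_nonempty α with hα | hα
  · simp
  set Φ : ι → ℝ := fun i => log (∑ x, exp (S i x))
  have hZ : ∀ i, ∑ x, exp (S i x - Φ i) = 1 := fun i => by
    simp_rw [exp_sub, ← sum_div, Φ, exp_log (by positivity : (0 : ℝ) < ∑ x, exp (S i x))]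
    exact div_self (by positivity)
  have hconv : ∀ x, exp (∑ i, w i * (S i x - Φ i)) ≤ ∑ i, w i * exp (S i x - Φ i) := fun x =>
    convexOn_exp.map_sum_le (fun i _ => hw i) hw1 (fun i _ => Set.mem_univ _)
  have hsplit : ∀ x, ∑ i, w i * S i x = ∑ i, w i * Φ i + ∑ i, w i * (S i x - Φ i) := fun x => by
    rw [← sum_add_distrib]; exact sum_congr rfl fun i _ => by ring
  calc log (∑ x, exp (∑ i, w i * S i x))
      ≤ log (exp (∑ i, w i * Φ i) * ∑ x, ∑ i, w i * exp (S i x - Φ i)) := by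
        simp_rw [hsplit, exp_add, ← mul_sum]
        exact log_le_log (by positivity) (mul_le_mul_of_nonneg_left
          (sum_le_sum fun x _ => hconv x) (exp_pos _).le)
    _ = ∑ i, w i * Φ i := by
        rw [sum_comm]; simp_rw [← mul_sum, hZ, mul_one, hw1, mul_one, log_exp]

end LogSumExp

section LogPartitionFn

variable {V X : Type*} [Fintype V] [DecidableEq V] [Fintype X]
  {G : SimpleGraph V} [DecidableRel G.Adj] {ψ : Sym2 V → (V → X) → ℝ}

theorem logPartitionFn_mono (hψ : ∀ e x, 0 ≤ ψ e x) {θ θ' : Sym2 V → ℝ}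
    (h : ∀ e ∈ G.edgeFinset, θ e ≤ θ' e) : logPartitionFn G ψ θ ≤ logPartitionFn G ψ θ' :=
  log_sum_exp_le_log_sum_exp fun x =>
    sum_le_sum fun e he => mul_le_mul_of_nonneg_right (h e he) (hψ e x)

theorem logPartitionFn_le_mul_of_le_mul (hψ : ∀ e x, 0 ≤ ψ e x) {c : ℝ} (hc : 1 ≤ c)
    {θ θ' : Sym2 V → ℝ} (h : ∀ e ∈ G.edgeFinset, θ' e ≤ c * θ e) :
    logPartitionFn G ψ θ' ≤ c * logPartitionFn G ψ θ :=
  calc logPartitionFn G ψ θ' ≤ logPartitionFn G ψ (fun e => c * θ e) := logPartitionFn_mono hψ h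
    _ ≤ c * logPartitionFn G ψ θ := by
      simp only [logPartitionFn, mul_assoc, ← mul_sum]
      exact log_sum_exp_mul_le hc _

theorem logPartitionFn_le_sum_mul {ι : Type*} [Fintype ι] {ρ : ι → ℝ} (hρ0 : ∀ i, 0 ≤ ρ i)
    (hρ1 : ∑ i, ρ i = 1) {θ : Sym2 V → ℝ} {θs : ι → Sym2 V → ℝ}
    (h : ∀ e ∈ G.edgeFinset, θ e = ∑ i, ρ i * θs i e) :
    logPartitionFn G ψ θ ≤ ∑ i, ρ i * logPartitionFn G ψ (θs i) := by
  have hmix : ∀ x, ∑ e ∈ G.edgeFinset, θ e * ψ e x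
      = ∑ i, ρ i * ∑ e ∈ G.edgeFinset, θs i e * ψ e x := fun x => by
    simp_rw [mul_sum]
    rw [sum_comm]
    exact sum_congr rfl fun e he => by simp only [h e he, sum_mul, mul_assoc]
  simp only [logPartitionFn, hmix]
  exact log_sum_exp_sum_le hρ0 hρ1 _

end LogPartitionFn

section EdgeAppearanceProb

variable {V ι : Type*} [Fintype ι] (ρ : ι → ℝ) (Tr : ι → SimpleGraph V)

/-- The paper's `ρ_e`: the `ρ`-probability that `e` is an edge of the random tree. -/
noncomputable def edgeAppearanceProb (e : Sym2 V) : ℝ :=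
  ∑ i, ρ i * (if e ∈ (Tr i).edgeSet then (1 : ℝ) else 0)

variable {ρ Tr}

theorem edgeAppearanceProb_le_one (hρ0 : ∀ i, 0 ≤ ρ i) (hρ1 : ∑ i, ρ i = 1) (e : Sym2 V) :
    edgeAppearanceProb ρ Tr e ≤ 1 :=
  hρ1 ▸ sum_le_sum fun i _ => mul_le_of_le_one_right (hρ0 i) (by split_ifs <;> norm_num)

theorem sum_mul_ite_div_edgeAppearanceProb {e : Sym2 V} (he : edgeAppearanceProb ρ Tr e ≠ 0)
    (a : ℝ) :
    ∑ i, ρ i * (if e ∈ (Tr i).edgeSet then a / edgeAppearanceProb ρ Tr e else 0) = a := by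
  have hterm : ∀ i, ρ i * (if e ∈ (Tr i).edgeSet then a / edgeAppearanceProb ρ Tr e else 0)
      = ρ i * (if e ∈ (Tr i).edgeSet then (1 : ℝ) else 0) * (a / edgeAppearanceProb ρ Tr e) :=
    fun i => by split_ifs <;> ring
  rw [sum_congr rfl fun i _ => hterm i, ← sum_mul]
  exact mul_div_cancel₀ a he

end EdgeAppearanceProb

theorem max_div_sqrt_mul_le_one_div_sqrt {κ P L U : ℝ} (hκ : 0 < κ) (hP : 0 < P)
    (hLP : L ≤ P) (hPU : P ≤ U) (hUL : U ≤ κ⁻¹ * L) :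
    max (P / √(L * U)) (√(L * U) / P) ≤ 1 / √κ := by
  have hκUL : κ * U ≤ L := (le_inv_mul_iff₀ hκ).1 hUL
  have hU : 0 < U := hP.trans_le hPU
  have hL : 0 < L := (mul_pos hκ hU).trans_le hκUL
  have hLU : 0 < √(L * U) := sqrt_pos.2 (mul_pos hL hU)
  rw [max_le_iff, div_le_div_iff₀ hLU (sqrt_pos.2 hκ), div_le_div_iff₀ hP (sqrt_pos.2 hκ),
    one_mul, one_mul, ← sqrt_sq hP.le, ← sqrt_mul' _ hκ.le, ← sqrt_mul' _ hκ.le]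
  constructor <;> apply sqrt_le_sqrt
  · nlinarith [mul_le_mul hκUL hPU hP.le hL.le,
      mul_le_mul_of_nonneg_left hPU (mul_pos hκ hP).le]
  · nlinarith [mul_le_mul hLP (hκUL.trans hLP) (mul_pos hκ hU).le hP.le]

theorem trw_approximation_guarantee_general
    {V X : Type*} [Fintype V] [DecidableEq V] [Fintype X]
    (G : SimpleGraph V) [DecidableRel G.Adj]
    (hE : G.edgeFinset.Nonempty)
    (ψ : Sym2 V → (V → X) → ℝ) (hψ : ∀ e x, 0 ≤ ψ e x)
    (θ : Sym2 V → ℝ) (hθ : ∀ e, 0 ≤ θ e)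
    (hΦ : 0 < logPartitionFn G ψ θ)
    {ι : Type*} [Fintype ι] (Tr : ι → SimpleGraph V)
    (ρ : ι → ℝ) (hρ0 : ∀ i, 0 ≤ ρ i) (hρ1 : ∑ i, ρ i = 1)
    (κ : ℝ)
    (hκ : κ = G.edgeFinset.inf' hE
      (fun e => ∑ i, ρ i * (if e ∈ (Tr i).edgeSet then (1 : ℝ) else 0)))
    (hκpos : 0 < κ)
    (L U phiHat : ℝ)
    (hL : L = ∑ i, ρ i * logPartitionFn G ψ (fun e =>
        if e ∈ (Tr i).edgeSet then θ e else 0))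
    (hU : U = ∑ i, ρ i * logPartitionFn G ψ (fun e =>
        if e ∈ (Tr i).edgeSet then
          θ e / (∑ j, ρ j * (if e ∈ (Tr j).edgeSet then (1 : ℝ) else 0))
        else 0))
    (hhat : phiHat = Real.sqrt (L * U)) :
    max (logPartitionFn G ψ θ / phiHat) (phiHat / logPartitionFn G ψ θ)
      ≤ 1 / Real.sqrt κ := by
  have hκμ : ∀ e ∈ G.edgeFinset, κ ≤ edgeAppearanceProb ρ Tr e := fun e he =>
    hκ ▸ inf'_le _ he
  have hκ1 : 1 ≤ κ⁻¹ := by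
    obtain ⟨e, he⟩ := hE
    exact one_le_inv₀ hκpos |>.2 <| (hκμ e he).trans (edgeAppearanceProb_le_one hρ0 hρ1 e)
  have hLΦ : L ≤ logPartitionFn G ψ θ := by
    calc L ≤ ∑ i, ρ i * logPartitionFn G ψ θ := hL ▸ sum_le_sum fun i _ =>
          mul_le_mul_of_nonneg_left (logPartitionFn_mono hψ fun e _ => by
            split_ifs <;> simp [hθ e]) (hρ0 i)
      _ = logPartitionFn G ψ θ := by rw [← sum_mul, hρ1, one_mul]
  have hΦU : logPartitionFn G ψ θ ≤ U := hU ▸ logPartitionFn_le_sum_mul hρ0 hρ1 fun e he =>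
    (sum_mul_ite_div_edgeAppearanceProb (hκpos.trans_le (hκμ e he)).ne' (θ e)).symm
  have hUL : U ≤ κ⁻¹ * L := by
    rw [hU, hL, mul_sum]
    refine sum_le_sum fun i _ => ?_
    rw [mul_left_comm]
    refine mul_le_mul_of_nonneg_left
      (logPartitionFn_le_mul_of_le_mul hψ hκ1 fun e he => ?_) (hρ0 i)
    split_ifs
    · rw [← div_eq_inv_mul]
      exact div_le_div_of_nonneg_left (hθ e) hκpos (hκμ e he)
    · simp
  exact hhat ▸ max_div_sqrt_mul_le_one_div_sqrt hκpos hΦ hLΦ hΦU hUL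

/-- Approximation guarantee of TRW′: for any distribution `ρ` on spanning trees of `G`
with `κ(G,ρ) = min_e ρ_e > 0` and non-negative weights and potentials with `Φ(θ) > 0`,
the estimate `Φ̂_ρ(θ) = √(L_ρ(θ)·U_ρ(θ))` satisfies
`max(Φ(θ)/Φ̂_ρ(θ), Φ̂_ρ(θ)/Φ(θ)) ≤ 1/√κ(G,ρ)`. -/
theorem trw_approximation_guarantee
    {V X : Type*} [Fintype V] [DecidableEq V] [Fintype X] [Nonempty X]
    (G : SimpleGraph V) [DecidableRel G.Adj] (hG : G.Connected)
    (hE : G.edgeFinset.Nonempty)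
    (ψ : Sym2 V → (V → X) → ℝ) (hψ : ∀ e x, 0 ≤ ψ e x)
    (hpair : ∀ e ∈ G.edgeSet, ∀ x y : V → X, (∀ v ∈ e, x v = y v) → ψ e x = ψ e y)
    (θ : Sym2 V → ℝ) (hθ : ∀ e, 0 ≤ θ e)
    (hΦ : 0 < logPartitionFn G ψ θ)
    {ι : Type*} [Fintype ι] (Tr : ι → SimpleGraph V)
    (hsub : ∀ i, Tr i ≤ G) (htree : ∀ i, (Tr i).IsTree)
    (ρ : ι → ℝ) (hρ0 : ∀ i, 0 ≤ ρ i) (hρ1 : ∑ i, ρ i = 1)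
    (κ : ℝ)
    (hκ : κ = G.edgeFinset.inf' hE
      (fun e => ∑ i, ρ i * (if e ∈ (Tr i).edgeSet then (1 : ℝ) else 0)))
    (hκpos : 0 < κ)
    (L U phiHat : ℝ)
    (hL : L = ∑ i, ρ i * logPartitionFn G ψ (fun e =>
        if e ∈ (Tr i).edgeSet then θ e else 0))
    (hU : U = ∑ i, ρ i * logPartitionFn G ψ (fun e =>
        if e ∈ (Tr i).edgeSet then
          θ e / (∑ j, ρ j * (if e ∈ (Tr j).edgeSet then (1 : ℝ) else 0))
        else 0))
    (hhat : phiHat = Real.sqrt (L * U)) :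
    max (logPartitionFn G ψ θ / phiHat) (phiHat / logPartitionFn G ψ θ)
      ≤ 1 / Real.sqrt κ :=
  trw_approximation_guarantee_general G hE ψ hψ θ hθ hΦ Tr ρ hρ0 hρ1 κ hκ hκpos L U phiHat hL hU
    hhat
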